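/- If the holding cost h is nondecreasing, then for every θ ∈ {1,…,S} the Whittle index ν(θ) := (Σ_{z=1}^S d^{θ+1}(z)·h(z) − Σ_{z=1}^S d^θ(z)·h(z)) / (Σ_{z=θ}^S d^θ(z) − Σ_{z=θ+1}^S d^{θ+1}(z)) − τ satisfies ν(θ) ≥ −τ; in particular, when the transmission cost τ = 0, the Whittle index is nonnegative at every state. -/

import Mathlib

open Finset

/-- β_{θ,ρ} = 1/(θ-1+1/ρ) -/
noncomputable def bet (ρ : ℝ) (θ : ℕ) : ℝ := 1 / ((θ : ℝ) - 1 + 1 / ρ)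

/-- Stationary distribution d^θ on {1,…,S} under the threshold policy θ;
for θ = S+1 it is the point mass at S. -/
noncomputable def dstat (S : ℕ) (ρ : ℝ) (θ : ℕ) (z : ℕ) : ℝ :=
  if θ = S + 1 then (if z = S then 1 else 0)
  else if z < θ then bet ρ θ
  else if z < S then (1 - ρ) ^ (z - θ) * bet ρ θ
  else (1 - ρ) ^ (S - θ) * bet ρ θ / ρ

section Aux

variable {S θ : ℕ} {ρ : ℝ}

lemma aux_denom_pos (hρ0 : 0 < ρ) (hθ1 : 1 ≤ θ) : 0 < (θ : ℝ) - 1 + 1 / ρ := by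
  have h1 : (1:ℝ) ≤ (θ:ℝ) := by exact_mod_cast hθ1
  have h2 := one_div_pos.mpr hρ0
  linarith

lemma bet_pos (hρ0 : 0 < ρ) (hθ1 : 1 ≤ θ) : 0 < bet ρ θ :=
  one_div_pos.mpr (aux_denom_pos hρ0 hθ1)

lemma cast_succ_denom : ((θ + 1 : ℕ) : ℝ) - 1 + 1 / ρ = ((θ : ℝ) - 1 + 1 / ρ) + 1 := by
  push_cast; ring

lemma bet_succ_lt (hρ0 : 0 < ρ) (hθ1 : 1 ≤ θ) : bet ρ (θ + 1) < bet ρ θ := by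
  unfold bet
  rw [cast_succ_denom]
  exact one_div_lt_one_div_of_lt (aux_denom_pos hρ0 hθ1) (by linarith)

lemma mul_bet_le (hρ0 : 0 < ρ) (hρ1 : ρ ≤ 1) (hθ1 : 1 ≤ θ) :
    (1 - ρ) * bet ρ θ ≤ bet ρ (θ + 1) := by
  have ha := aux_denom_pos hρ0 hθ1
  unfold bet
  rw [cast_succ_denom, mul_one_div, div_le_div_iff₀ ha (by linarith)]
  have hu : ρ * (1 / ρ) = 1 := mul_one_div_cancel (ne_of_gt hρ0)
  have hθρ : 0 ≤ ρ * (θ : ℝ) := mul_nonneg hρ0.le (Nat.cast_nonneg θ)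
  nlinarith

lemma geom_aux (ρ : ℝ) : ∀ n : ℕ, ρ * ∑ k ∈ range n, (1 - ρ) ^ k = 1 - (1 - ρ) ^ n := by
  intro n
  induction n with
  | zero => simp
  | succ n ih => rw [Finset.sum_range_succ, mul_add, ih, pow_succ]; ring

lemma tail_sum (hρ0 : 0 < ρ) (hθ1 : 1 ≤ θ) (hθS : θ ≤ S) :
    ∑ z ∈ Icc θ S, dstat S ρ θ z = bet ρ θ / ρ := by
  obtain ⟨m, rfl⟩ : ∃ m, S = m + 1 := ⟨S - 1, (Nat.succ_pred_eq_of_pos (by omega)).symm⟩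
  have hne : θ ≠ m + 1 + 1 := by omega
  rw [Finset.sum_Icc_succ_top hθS]
  have h1 : ∑ z ∈ Icc θ m, dstat (m+1) ρ θ z
      = ∑ z ∈ Icc θ m, (1 - ρ) ^ (z - θ) * bet ρ θ := by
    refine Finset.sum_congr rfl fun z hz => ?_
    simp only [Finset.mem_Icc] at hz
    rw [dstat, if_neg hne, if_neg (by omega), if_pos (by omega)]
  have h2 : dstat (m+1) ρ θ (m+1) = (1 - ρ) ^ (m + 1 - θ) * bet ρ θ / ρ := by
    rw [dstat, if_neg hne, if_neg (by omega), if_neg (by omega)]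
  rw [h1, h2, ← Finset.Ico_add_one_right_eq_Icc, Finset.sum_Ico_eq_sum_range]
  have h3 : ∑ k ∈ range (m + 1 - θ), (1 - ρ) ^ (θ + k - θ) * bet ρ θ
      = (∑ k ∈ range (m + 1 - θ), (1 - ρ) ^ k) * bet ρ θ := by
    rw [Finset.sum_mul]
    refine Finset.sum_congr rfl fun k _ => ?_
    congr 2
    omega
  rw [h3]
  have hρ : ρ ≠ 0 := ne_of_gt hρ0
  have hs : ∑ k ∈ range (m + 1 - θ), (1 - ρ) ^ k = (1 - (1 - ρ) ^ (m + 1 - θ)) / ρ := by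
    rw [eq_div_iff hρ, mul_comm]; exact geom_aux ρ (m + 1 - θ)
  rw [hs]
  field_simp
  ring

lemma full_sum (hρ0 : 0 < ρ) (hθ1 : 1 ≤ θ) (hθS : θ ≤ S) :
    ∑ z ∈ Icc 1 S, dstat S ρ θ z = 1 := by
  have hsplit : ∑ z ∈ Ioc 0 S, dstat S ρ θ z
      = ∑ z ∈ Ioc 0 (θ - 1), dstat S ρ θ z + ∑ z ∈ Ioc (θ - 1) S, dstat S ρ θ z :=
    (Finset.sum_Ioc_consecutive _ (by omega) (by omega)).symm
  have e0 : Icc 1 S = Ioc 0 S := by rw [← Finset.Icc_add_one_left_eq_Ioc]; simp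
  have e1 : Ioc 0 (θ - 1) = Icc 1 (θ - 1) := by rw [← Finset.Icc_add_one_left_eq_Ioc]; simp
  have e2 : Ioc (θ - 1) S = Icc θ S := by
    rw [← Finset.Icc_add_one_left_eq_Ioc]; congr 1; omega
  rw [e0, hsplit, e1, e2, tail_sum hρ0 hθ1 hθS]
  have hhead : ∑ z ∈ Icc 1 (θ - 1), dstat S ρ θ z = ((θ : ℝ) - 1) * bet ρ θ := by
    have : ∑ z ∈ Icc 1 (θ - 1), dstat S ρ θ z = ∑ z ∈ Icc 1 (θ - 1), bet ρ θ := by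
      refine Finset.sum_congr rfl fun z hz => ?_
      simp only [Finset.mem_Icc] at hz
      rw [dstat, if_neg (by omega), if_pos (by omega)]
    rw [this, Finset.sum_const, Nat.card_Icc, nsmul_eq_mul]
    congr 1
    have : θ - 1 + 1 - 1 = θ - 1 := by omega
    rw [this, Nat.cast_sub hθ1, Nat.cast_one]
  rw [hhead]
  have ha := aux_denom_pos hρ0 hθ1
  have hb : bet ρ θ * ((θ : ℝ) - 1 + 1 / ρ) = 1 := by
    simp only [bet]; rw [one_div_mul_cancel (ne_of_gt ha)]
  calc ((θ : ℝ) - 1) * bet ρ θ + bet ρ θ / ρ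
      = bet ρ θ * ((θ : ℝ) - 1 + 1 / ρ) := by rw [div_eq_mul_one_div]; ring
    _ = 1 := hb

lemma full_sum_top (hS1 : 1 ≤ S) (ρ : ℝ) :
    ∑ z ∈ Icc 1 S, dstat S ρ (S + 1) z = 1 := by
  have : ∀ z ∈ Icc 1 S, dstat S ρ (S + 1) z = if z = S then 1 else 0 := by
    intro z hz
    rw [dstat, if_pos rfl]
  rw [Finset.sum_congr rfl this, Finset.sum_ite_eq' (Icc 1 S) S (fun _ => (1:ℝ))]
  rw [if_pos (by simp [Finset.mem_Icc]; omega)]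

lemma dstat_eval_lt (hne : θ ≠ S + 1) {z : ℕ} (hz : z < θ) : dstat S ρ θ z = bet ρ θ := by
  rw [dstat, if_neg hne, if_pos hz]

lemma dstat_eval_mid (hne : θ ≠ S + 1) {z : ℕ} (hz1 : ¬ z < θ) (hz2 : z < S) :
    dstat S ρ θ z = (1 - ρ) ^ (z - θ) * bet ρ θ := by
  rw [dstat, if_neg hne, if_neg hz1, if_pos hz2]

lemma dstat_eval_hi (hne : θ ≠ S + 1) {z : ℕ} (hz1 : ¬ z < θ) (hz2 : ¬ z < S) :
    dstat S ρ θ z = (1 - ρ) ^ (S - θ) * bet ρ θ / ρ := by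
  rw [dstat, if_neg hne, if_neg hz1, if_neg hz2]

lemma dstat_eval_top {z : ℕ} : dstat S ρ (S + 1) z = if z = S then 1 else 0 := by
  rw [dstat, if_pos rfl]

lemma dstat_le_of_lt (hρ0 : 0 < ρ) (hθ1 : 1 ≤ θ) (hθS : θ ≤ S) {z : ℕ} (hz : z < θ) :
    dstat S ρ (θ + 1) z ≤ dstat S ρ θ z := by
  rw [dstat_eval_lt (θ := θ) (by omega) hz]
  by_cases hc : θ = S
  · subst hc
    rw [dstat_eval_top, if_neg (by omega)]
    exact (bet_pos hρ0 hθ1).le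
  · rw [dstat_eval_lt (by omega) (show z < θ + 1 by omega)]
    exact (bet_succ_lt hρ0 hθ1).le

lemma dstat_ge_of_gt (hρ0 : 0 < ρ) (hρ1 : ρ ≤ 1) (hθ1 : 1 ≤ θ) {z : ℕ}
    (hz : θ < z) (hzS : z ≤ S) :
    dstat S ρ θ z ≤ dstat S ρ (θ + 1) z := by
  have hθS : θ < S := lt_of_lt_of_le hz hzS
  have hpow : ∀ k : ℕ, (0:ℝ) ≤ (1 - ρ) ^ k := fun k => pow_nonneg (by linarith) k
  have key : ∀ n : ℕ, θ < n → (1 - ρ) ^ (n - θ) * bet ρ θ ≤ (1 - ρ) ^ (n - (θ + 1)) * bet ρ (θ + 1) := by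
    intro n hn
    have hrw : n - θ = (n - (θ + 1)) + 1 := by omega
    rw [hrw, pow_succ]
    calc (1 - ρ) ^ (n - (θ + 1)) * (1 - ρ) * bet ρ θ
        = (1 - ρ) ^ (n - (θ + 1)) * ((1 - ρ) * bet ρ θ) := by ring
      _ ≤ (1 - ρ) ^ (n - (θ + 1)) * bet ρ (θ + 1) :=
        mul_le_mul_of_nonneg_left (mul_bet_le hρ0 hρ1 hθ1) (hpow _)
  by_cases hzlt : z < S
  · rw [dstat_eval_mid (θ := θ) (by omega) (by omega) hzlt,
      dstat_eval_mid (θ := θ + 1) (by omega) (by omega) hzlt]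
    exact key z hz
  · rw [dstat_eval_hi (θ := θ) (by omega) (by omega) hzlt,
      dstat_eval_hi (θ := θ + 1) (by omega) (by omega) hzlt]
    exact (div_le_div_iff_of_pos_right hρ0).mpr (key S (by omega))

end Aux

/-- for nondecreasing h, the Whittle index ν(θ) satisfies
ν(θ) ≥ -τ; in particular it is nonnegative when τ = 0. -/
theorem whittle_index_lower_bound
    (S : ℕ) (hS : 2 ≤ S) (ρ : ℝ) (hρ0 : 0 < ρ) (hρ1 : ρ ≤ 1)
    (h : ℕ → ℝ)
    (hmono : ∀ a ∈ Finset.Icc 1 S, ∀ b ∈ Finset.Icc 1 S, a ≤ b → h a ≤ h b)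
    (τ : ℝ)
    (θ : ℕ) (hθ : θ ∈ Finset.Icc 1 S)
    (ν : ℝ)
    (hν : ν = ((∑ z ∈ Finset.Icc 1 S, dstat S ρ (θ + 1) z * h z)
              - ∑ z ∈ Finset.Icc 1 S, dstat S ρ θ z * h z)
            / ((∑ z ∈ Finset.Icc θ S, dstat S ρ θ z)
              - ∑ z ∈ Finset.Icc (θ + 1) S, dstat S ρ (θ + 1) z) - τ) :
    -τ ≤ ν ∧ (τ = 0 → 0 ≤ ν) := by
  simp only [Finset.mem_Icc] at hθ
  obtain ⟨hθ1, hθS⟩ := hθ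
  -- sums to one
  have e1 : ∑ z ∈ Finset.Icc 1 S, dstat S ρ θ z = 1 := full_sum hρ0 hθ1 hθS
  have e2 : ∑ z ∈ Finset.Icc 1 S, dstat S ρ (θ + 1) z = 1 := by
    by_cases hc : θ = S
    · subst hc; exact full_sum_top (by omega) ρ
    · exact full_sum hρ0 (by omega) (by omega)
  -- numerator nonneg
  have hnum : 0 ≤ (∑ z ∈ Finset.Icc 1 S, dstat S ρ (θ + 1) z * h z)
      - ∑ z ∈ Finset.Icc 1 S, dstat S ρ θ z * h z := by
    have hrw : (∑ z ∈ Finset.Icc 1 S, dstat S ρ (θ + 1) z * h z)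
        - ∑ z ∈ Finset.Icc 1 S, dstat S ρ θ z * h z
        = ∑ z ∈ Finset.Icc 1 S,
            (dstat S ρ (θ + 1) z - dstat S ρ θ z) * (h z - h θ) := by
      have expand : ∀ z ∈ Finset.Icc 1 S,
          (dstat S ρ (θ + 1) z - dstat S ρ θ z) * (h z - h θ)
          = (dstat S ρ (θ + 1) z * h z - dstat S ρ θ z * h z)
            - (dstat S ρ (θ + 1) z - dstat S ρ θ z) * h θ := fun z _ => by ring
      rw [Finset.sum_congr rfl expand, Finset.sum_sub_distrib, Finset.sum_sub_distrib,
        ← Finset.sum_mul, Finset.sum_sub_distrib, e1, e2]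
      ring
    rw [hrw]
    refine Finset.sum_nonneg fun z hz => ?_
    simp only [Finset.mem_Icc] at hz
    rcases lt_trichotomy z θ with hlt | heq | hgt
    · have h1 : dstat S ρ (θ + 1) z - dstat S ρ θ z ≤ 0 :=
        sub_nonpos.mpr (dstat_le_of_lt hρ0 hθ1 hθS hlt)
      have h2 : h z - h θ ≤ 0 := sub_nonpos.mpr
        (hmono z (by simp [Finset.mem_Icc]; omega) θ (by simp [Finset.mem_Icc]; omega) hlt.le)
      have := mul_nonneg (neg_nonneg.2 h1) (neg_nonneg.2 h2)
      rwa [neg_mul_neg] at this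
    · subst heq; simp
    · have h1 : 0 ≤ dstat S ρ (θ + 1) z - dstat S ρ θ z :=
        sub_nonneg.mpr (dstat_ge_of_gt hρ0 hρ1 hθ1 hgt hz.2)
      have h2 : 0 ≤ h z - h θ := sub_nonneg.mpr
        (hmono θ (by simp [Finset.mem_Icc]; omega) z (by simp [Finset.mem_Icc]; omega) hgt.le)
      exact mul_nonneg h1 h2
  -- denominator positive
  have hden : 0 < (∑ z ∈ Finset.Icc θ S, dstat S ρ θ z)
      - ∑ z ∈ Finset.Icc (θ + 1) S, dstat S ρ (θ + 1) z := by
    rw [tail_sum hρ0 hθ1 hθS]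
    by_cases hc : θ = S
    · have : Finset.Icc (θ + 1) S = ∅ := Finset.Icc_eq_empty (by omega)
      rw [this, Finset.sum_empty]
      simpa using div_pos (bet_pos hρ0 hθ1) hρ0
    · rw [tail_sum hρ0 (by omega) (by omega)]
      have : bet ρ (θ + 1) / ρ < bet ρ θ / ρ :=
        (div_lt_div_iff_of_pos_right hρ0).mpr (bet_succ_lt hρ0 hθ1)
      linarith
  have hq : 0 ≤ ((∑ z ∈ Finset.Icc 1 S, dstat S ρ (θ + 1) z * h z)
              - ∑ z ∈ Finset.Icc 1 S, dstat S ρ θ z * h z)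
            / ((∑ z ∈ Finset.Icc θ S, dstat S ρ θ z)
              - ∑ z ∈ Finset.Icc (θ + 1) S, dstat S ρ (θ + 1) z) :=
    div_nonneg hnum hden.le
  constructor
  · rw [hν]; linarith
  · intro hτ; rw [hν, hτ]; linarith
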